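/- arXiv:1509.07218 — 8 statements merged into one kernel-verified Lean document; each statement's English description precedes it below -/
import Mathlib

section
/- For every triple x = (x₁, x₂, x₃) ∈ ℂ³, the outer Napoleon triple N⁻(x) is equilateral: |N⁻(x)₁ − N⁻(x)₂| = |N⁻(x)₂ − N⁻(x)₃| = |N⁻(x)₃ − N⁻(x)₁|. -/
open Complex

/-- Inner Torricelli transformation on triples of complex numbers. -/
noncomputable def Tplus (x : ℂ × ℂ × ℂ) : ℂ × ℂ × ℂ :=
  ((x.2.1 + x.2.2) / 2 + (Real.sqrt 3 / 2 : ℝ) * Complex.I * (x.2.2 - x.2.1),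
   (x.2.2 + x.1) / 2 + (Real.sqrt 3 / 2 : ℝ) * Complex.I * (x.1 - x.2.2),
   (x.1 + x.2.1) / 2 + (Real.sqrt 3 / 2 : ℝ) * Complex.I * (x.2.1 - x.1))

/-- Outer Torricelli transformation on triples of complex numbers. -/
noncomputable def Tminus (x : ℂ × ℂ × ℂ) : ℂ × ℂ × ℂ :=
  ((x.2.1 + x.2.2) / 2 + (Real.sqrt 3 / 2 : ℝ) * (-Complex.I) * (x.2.2 - x.2.1),
   (x.2.2 + x.1) / 2 + (Real.sqrt 3 / 2 : ℝ) * (-Complex.I) * (x.1 - x.2.2),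
   (x.1 + x.2.1) / 2 + (Real.sqrt 3 / 2 : ℝ) * (-Complex.I) * (x.2.1 - x.1))

/-- Inner Napoleon transformation. -/
noncomputable def Nplus (x : ℂ × ℂ × ℂ) : ℂ × ℂ × ℂ :=
  ((x.2.1 + x.2.2 + (Tplus x).1) / 3,
   (x.2.2 + x.1 + (Tplus x).2.1) / 3,
   (x.1 + x.2.1 + (Tplus x).2.2) / 3)

/-- Outer Napoleon transformation. -/
noncomputable def Nminus (x : ℂ × ℂ × ℂ) : ℂ × ℂ × ℂ :=
  ((x.2.1 + x.2.2 + (Tminus x).1) / 3,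
   (x.2.2 + x.1 + (Tminus x).2.1) / 3,
   (x.1 + x.2.1 + (Tminus x).2.2) / 3)

/-- Centroid of a triple. -/
noncomputable def centroid3 (x : ℂ × ℂ × ℂ) : ℂ := (x.1 + x.2.1 + x.2.2) / 3

/-! The sides of the outer Napoleon triangle are obtained from one another by the rotation `ω`
through `2π/3`: a direct computation gives `N₂ - N₃ = ω (N₁ - N₂)`, and since `1 + ω + ω² = 0`
the same rotation then carries `N₂ - N₃` to `N₃ - N₁`. As `‖ω‖ = 1`, all three sides have equal
length. -/

lemma sub_eq_mul_sub_of_sq_add_add_one_eq_zero {R : Type*} [CommRing R] {ζ a b c : R}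
    (hζ : ζ ^ 2 + ζ + 1 = 0) (h : b - c = ζ * (a - b)) : c - a = ζ * (b - c) := by
  linear_combination (-1 - ζ) * h - (a - b) * hζ

noncomputable def ω : ℂ := -1 / 2 + (Real.sqrt 3 / 2 : ℝ) * I

lemma sqrt_three_mul_I_sq : ((Real.sqrt 3 : ℝ) * I : ℂ) ^ 2 = -3 := by
  rw [mul_pow, I_sq, ← ofReal_pow, Real.sq_sqrt (by norm_num)]
  norm_num

lemma ω_sq_add_ω_add_one : ω ^ 2 + ω + 1 = 0 := by
  simp only [ω, ofReal_div, ofReal_ofNat]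
  linear_combination (1 / 4 : ℂ) * sqrt_three_mul_I_sq

lemma norm_ω : ‖ω‖ = 1 := by
  have h : normSq ω = 1 := by
    simp only [ω, normSq_apply, add_re, add_im, mul_re, mul_im, ofReal_re, ofReal_im, I_re, I_im]
    norm_num [div_mul_div_comm]
  rw [norm_def, h, Real.sqrt_one]

lemma Nminus_sub_eq_ω_mul (x : ℂ × ℂ × ℂ) :
    (Nminus x).2.1 - (Nminus x).2.2 = ω * ((Nminus x).1 - (Nminus x).2.1) := by
  simp only [Nminus, Tminus, ω, ofReal_div, ofReal_ofNat]
  linear_combination (-x.1 / 12 - x.2.1 / 12 + x.2.2 / 6) * sqrt_three_mul_I_sq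

theorem outer_napoleon_equilateral (x : ℂ × ℂ × ℂ) :
    ‖(Nminus x).1 - (Nminus x).2.1‖ = ‖(Nminus x).2.1 - (Nminus x).2.2‖ ∧
    ‖(Nminus x).2.1 - (Nminus x).2.2‖ = ‖(Nminus x).2.2 - (Nminus x).1‖ := by
  have h₁ := Nminus_sub_eq_ω_mul x
  have h₂ := sub_eq_mul_sub_of_sq_add_add_one_eq_zero ω_sq_add_ω_add_one h₁
  exact ⟨by rw [h₁, norm_mul, norm_ω, one_mul], by rw [h₂, norm_mul, norm_ω, one_mul]⟩
end

section
/- For every triple x = (x₁, x₂, x₃) ∈ ℂ³, the inner Napoleon triple N⁺(x) is equilateral: |N⁺(x)₁ − N⁺(x)₂| = |N⁺(x)₂ − N⁺(x)₃| = |N⁺(x)₃ − N⁺(x)₁|. -/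
/-!
Writing `N⁺(x) = (n₁, n₂, n₃)`, one has `n₂ - n₃ = ω (n₁ - n₂)` with `ω = -1/2 - (√3/2) i`,
the rotation by `-2π/3`: both sides are linear in `x`, and they agree once `(√3)² = 3` and
`i² = -1` are used. Since `N⁺` commutes with the cyclic relabelling of the vertices, also
`n₃ - n₁ = ω (n₂ - n₃)`, and `‖ω‖ = 1` makes the three sides equally long.
-/

open Complex

noncomputable def omega : ℂ := -1 / 2 - (Real.sqrt 3 / 2 : ℝ) * I

theorem norm_omega : ‖omega‖ = 1 := by
  have h3 : Real.sqrt 3 ^ 2 = 3 := Real.sq_sqrt (by norm_num)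
  rw [Complex.norm_def, Real.sqrt_eq_one, Complex.normSq_apply]
  simp only [omega, sub_re, sub_im, mul_re, mul_im, ofReal_re, ofReal_im, I_re, I_im]
  norm_num
  linear_combination h3 / 4

theorem Nplus_rotate (a b c : ℂ) :
    Nplus (b, c, a) = ((Nplus (a, b, c)).2.1, (Nplus (a, b, c)).2.2, (Nplus (a, b, c)).1) :=
  rfl

theorem Nplus_sub_eq_omega_mul (x : ℂ × ℂ × ℂ) :
    (Nplus x).2.1 - (Nplus x).2.2 = omega * ((Nplus x).1 - (Nplus x).2.1) := by
  have h3 : ((Real.sqrt 3 : ℝ) : ℂ) ^ 2 = 3 := by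
    rw [← ofReal_pow, Real.sq_sqrt (by norm_num)]
    norm_num
  obtain ⟨a, b, c⟩ := x
  simp only [Nplus, Tplus, omega]
  push_cast
  linear_combination ((a + b - 2 * c) / 12) * h3 +
    (((Real.sqrt 3 : ℝ) : ℂ) ^ 2 * (2 * c - a - b) / 12) * I_sq

theorem inner_napoleon_equilateral (x : ℂ × ℂ × ℂ) :
    ‖(Nplus x).1 - (Nplus x).2.1‖ = ‖(Nplus x).2.1 - (Nplus x).2.2‖ ∧
    ‖(Nplus x).2.1 - (Nplus x).2.2‖ = ‖(Nplus x).2.2 - (Nplus x).1‖ := by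
  obtain ⟨a, b, c⟩ := x
  have h₁ := Nplus_sub_eq_omega_mul (a, b, c)
  have h₂ := Nplus_sub_eq_omega_mul (b, c, a)
  rw [Nplus_rotate] at h₂
  constructor
  · rw [h₁, norm_mul, norm_omega, one_mul]
  · rw [h₂, norm_mul, norm_omega, one_mul]
end

section
/- If a triple x = (x₁, x₂, x₃) ∈ ℂ³ satisfies x₁ + ω·x₂ + ω²·x₃ = 0 with ω = exp(2πI/3), then the inner Torricelli transformation fixes it: T⁺(x) = x. -/
open Complex

lemma Complex.exp_two_pi_mul_I_div_three :
    exp (2 * Real.pi * I / 3) = -1 / 2 + ((Real.sqrt 3 / 2 : ℝ) : ℂ) * I := by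
  have harg : 2 * (Real.pi : ℂ) * I / 3 = ((Real.pi - Real.pi / 3 : ℝ) : ℂ) * I := by
    push_cast; ring
  rw [harg, exp_mul_I, ← ofReal_cos, ← ofReal_sin, Real.cos_pi_sub, Real.sin_pi_sub,
    Real.cos_pi_div_three, Real.sin_pi_div_three]
  push_cast; ring

lemma add_mul_add_sq_mul_rotate {R : Type*} [CommRing R] {ω a b c : R}
    (hω : ω ^ 3 = 1) (h : a + ω * b + ω ^ 2 * c = 0) :
    b + ω * c + ω ^ 2 * a = 0 := by
  linear_combination ω ^ 2 * h - (b + ω * c) * hω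

/-- For `ω = exp (2πi/3)` the factor `ω + 1/2` is `(√3/2) i`, so the left-hand side is the apex
of the equilateral triangle erected on `b c`, a coordinate of `Tplus`. -/
lemma apex_eq_of_add_mul_add_sq_mul_eq_zero {K : Type*} [Field K] [CharZero K] {ω a b c : K}
    (hω : 1 + ω + ω ^ 2 = 0) (h : a + ω * b + ω ^ 2 * c = 0) :
    (b + c) / 2 + (ω + 1 / 2) * (c - b) = a := by
  linear_combination -h + c * hω

theorem inner_torricelli_fixes_equilateral (x : ℂ × ℂ × ℂ)
    (h : x.1 + Complex.exp (2 * Real.pi * Complex.I / 3) * x.2.1 +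
      Complex.exp (2 * Real.pi * Complex.I / 3) ^ 2 * x.2.2 = 0) :
    Tplus x = x := by
  obtain ⟨a, b, c⟩ := x
  set ω := exp (2 * Real.pi * I / 3) with hω_def
  have hprim : IsPrimitiveRoot ω 3 := by
    simpa using isPrimitiveRoot_exp 3 (by norm_num)
  have hcube : ω ^ 3 = 1 := hprim.pow_eq_one
  have hsum : 1 + ω + ω ^ 2 = 0 := by
    simpa [Finset.sum_range_succ] using hprim.geom_sum_eq_zero (by norm_num)
  have hrot : ((Real.sqrt 3 / 2 : ℝ) : ℂ) * I = ω + 1 / 2 := by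
    rw [hω_def, exp_two_pi_mul_I_div_three]; ring
  have hb := add_mul_add_sq_mul_rotate hcube h
  have hc := add_mul_add_sq_mul_rotate hcube hb
  simp only [Tplus, hrot, Prod.mk.injEq]
  exact ⟨apex_eq_of_add_mul_add_sq_mul_eq_zero hsum h,
    apex_eq_of_add_mul_add_sq_mul_eq_zero hsum hb, apex_eq_of_add_mul_add_sq_mul_eq_zero hsum hc⟩
end

section
/- If a triple x = (x₁, x₂, x₃) ∈ ℂ³ satisfies x₁ + ω·x₂ + ω²·x₃ = 0 with ω = exp(2πI/3), then the outer Torricelli configuration reflects each vertex across the midpoint of the opposite side: T⁻(x)₁ = x₂ + x₃ − x₁, T⁻(x)₂ = x₃ + x₁ − x₂, and T⁻(x)₃ = x₁ + x₂ − x₃. -/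
open Complex

/-!
The condition `x₁ + ω x₂ + ω² x₃ = 0` says that `x₁ = T⁺(x)₁`, the apex of the inner equilateral
triangle on `x₂x₃`. The inner and outer apexes are reflections of each other in the midpoint of
`x₂x₃`, so `T⁻(x)₁ = x₂ + x₃ - x₁`. Multiplying the condition by `ω²` shows that it is invariant
under cyclic relabelling, which gives the other two coordinates.
-/

local notation "ω" => Complex.exp (2 * Real.pi * Complex.I / 3)

def IsCCWEquilateral (x : ℂ × ℂ × ℂ) : Prop :=
  x.1 + ω * x.2.1 + ω ^ 2 * x.2.2 = 0

lemma isPrimitiveRoot_exp_two_pi_I_div_three : IsPrimitiveRoot ω 3 := by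
  exact_mod_cast Complex.isPrimitiveRoot_exp 3 (by norm_num)

lemma exp_two_pi_I_div_three :
    ω = -1 / 2 + ((Real.sqrt 3 / 2 : ℝ) : ℂ) * Complex.I := by
  have hπ : 2 * Real.pi / 3 = Real.pi - Real.pi / 3 := by ring
  have harg : 2 * (Real.pi : ℂ) * Complex.I / 3 = ((2 * Real.pi / 3 : ℝ) : ℂ) * Complex.I := by
    push_cast; ring
  rw [harg, Complex.exp_mul_I, ← Complex.ofReal_cos, ← Complex.ofReal_sin, hπ,
    Real.cos_pi_sub, Real.sin_pi_sub, Real.cos_pi_div_three, Real.sin_pi_div_three]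
  push_cast; ring

lemma exp_two_pi_I_div_three_sq :
    ω ^ 2 = -1 / 2 - ((Real.sqrt 3 / 2 : ℝ) : ℂ) * Complex.I := by
  have h := isPrimitiveRoot_exp_two_pi_I_div_three.geom_sum_eq_zero (by norm_num)
  simp only [Finset.sum_range_succ, Finset.sum_range_zero] at h
  linear_combination h - exp_two_pi_I_div_three

lemma Tplus_fst_add_Tminus_fst (x : ℂ × ℂ × ℂ) : (Tplus x).1 + (Tminus x).1 = x.2.1 + x.2.2 := by
  simp only [Tplus, Tminus]
  ring

namespace IsCCWEquilateral

variable {x : ℂ × ℂ × ℂ}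

lemma rotate (h : IsCCWEquilateral x) : IsCCWEquilateral (x.2.1, x.2.2, x.1) := by
  have h3 := isPrimitiveRoot_exp_two_pi_I_div_three.pow_eq_one
  unfold IsCCWEquilateral at *
  linear_combination ω ^ 2 * h - (x.2.1 + ω * x.2.2) * h3

lemma fst_eq_Tplus_fst (h : IsCCWEquilateral x) : x.1 = (Tplus x).1 := by
  unfold IsCCWEquilateral at h
  rw [exp_two_pi_I_div_three_sq, exp_two_pi_I_div_three] at h
  simp only [Tplus]
  linear_combination h

lemma Tminus_fst (h : IsCCWEquilateral x) : (Tminus x).1 = x.2.1 + x.2.2 - x.1 := by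
  linear_combination Tplus_fst_add_Tminus_fst x + h.fst_eq_Tplus_fst

end IsCCWEquilateral

theorem outer_torricelli_reflects_equilateral (x : ℂ × ℂ × ℂ)
    (h : x.1 + Complex.exp (2 * Real.pi * Complex.I / 3) * x.2.1 +
      Complex.exp (2 * Real.pi * Complex.I / 3) ^ 2 * x.2.2 = 0) :
    (Tminus x).1 = x.2.1 + x.2.2 - x.1 ∧
    (Tminus x).2.1 = x.2.2 + x.1 - x.2.1 ∧
    (Tminus x).2.2 = x.1 + x.2.1 - x.2.2 := by
  have hx : IsCCWEquilateral x := h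
  -- `Tminus` commutes with the cyclic shift definitionally, so the second and third claims are
  -- the first one for the shifted triples.
  exact ⟨hx.Tminus_fst, hx.rotate.Tminus_fst, hx.rotate.rotate.Tminus_fst⟩
end

section
/- The outer Napoleon transformation is eventually 2-periodic: for every triple x = (x₁, x₂, x₃) ∈ ℂ³ and every integer k ≥ 1, the (k+2)-fold iterate of N⁻ applied to x equals the k-fold iterate of N⁻ applied to x. -/
open Complex

/-!
In the Fourier basis of `ℂ³` given by the cube roots of unity, the cyclically symmetric linear
map `N⁻` is diagonal, with eigenvalue `1` on constant triples (the centroid is preserved), `0` on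
one rotating mode (Napoleon's theorem: the image is equilateral) and `-1` on the other (the
Napoleon triangle of an equilateral triangle is its point reflection in the centroid). Hence
`N⁻ ∘ N⁻ ∘ N⁻ = N⁻`. Concretely `N⁻(x)₁ = α x₂ + β x₃` with `α + β = 1` and `3 α β = 1`, and these
two relations alone force the cube identity.
-/

section Circulant

variable {R : Type*} [CommRing R]

def circulant3 (α β : R) (x : R × R × R) : R × R × R :=
  (α * x.2.1 + β * x.2.2, α * x.2.2 + β * x.1, α * x.1 + β * x.2.1)

theorem circulant3_iterate_three {α β : R} (hsum : α + β = 1) (hprod : 3 * α * β = 1) :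
    (circulant3 α β)^[3] = circulant3 α β := by
  funext ⟨a, b, c⟩
  simp only [Function.iterate_succ, Function.iterate_zero, Function.comp_apply, id, circulant3,
    Prod.mk.injEq]
  have hcubes : α ^ 3 + β ^ 3 = 0 := by
    linear_combination ((α + β) ^ 2 + α + β) * hsum - (α + β) * hprod
  have hα : 3 * α ^ 2 * β = α := by linear_combination α * hprod
  have hβ : 3 * α * β ^ 2 = β := by linear_combination β * hprod
  refine ⟨?_, ?_, ?_⟩
  · linear_combination a * hcubes + b * hα + c * hβ
  · linear_combination b * hcubes + c * hα + a * hβ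
  · linear_combination c * hcubes + a * hα + b * hβ

end Circulant

theorem Function.iterate_add_two_of_iterate_three {α : Type*} {f : α → α} (hf : f^[3] = f)
    {k : ℕ} (hk : 1 ≤ k) : f^[k + 2] = f^[k] := by
  obtain ⟨n, rfl⟩ := Nat.exists_eq_add_of_le' hk
  rw [show n + 1 + 2 = n + 3 by omega, Function.iterate_add, hf, ← Function.iterate_succ]

theorem Nminus_eq_circulant3 :
    Nminus = circulant3 (1 / 2 + Real.sqrt 3 * I / 6) (1 / 2 - Real.sqrt 3 * I / 6) := by
  funext ⟨a, b, c⟩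
  simp only [Nminus, Tminus, circulant3, Prod.mk.injEq]
  push_cast
  refine ⟨by ring, by ring, by ring⟩

theorem Nminus_iterate_three : Nminus^[3] = Nminus := by
  have hsqrt : (Real.sqrt 3 : ℂ) ^ 2 = 3 := by
    exact_mod_cast Real.sq_sqrt (by norm_num : (0 : ℝ) ≤ 3)
  rw [Nminus_eq_circulant3]
  refine circulant3_iterate_three (by ring) ?_
  linear_combination (-1 / 12 : ℂ) * I ^ 2 * hsqrt - (1 / 4 : ℂ) * I_sq

theorem outer_napoleon_eventually_two_periodic (x : ℂ × ℂ × ℂ) (k : ℕ) (hk : 1 ≤ k) :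
    Nminus^[k + 2] x = Nminus^[k] x := by
  rw [Function.iterate_add_two_of_iterate_three Nminus_iterate_three hk]
end

section
/- If a triple x = (x₁, x₂, x₃) ∈ ℂ³ is positively oriented, i.e., Im((conj(x₂ − x₁))·(x₃ − x₁)) ≥ 0, then the triple is at least as close to its inner Torricelli configuration as to its outer one: Σᵢ |T⁺(x)ᵢ − xᵢ|² ≤ Σᵢ |T⁻(x)ᵢ − xᵢ|², with equality if and only if x₁, x₂, x₃ are collinear, i.e., Im((conj(x₂ − x₁))·(x₃ − x₁)) = 0. -/
open Complex

/- `T±(x)ᵢ = m ± v` is the apex of the equilateral triangle erected on the side opposite `xᵢ`,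
with `m` the midpoint of that side and `v` perpendicular to it. By polarization the squared
distances from `xᵢ` to the two apexes differ by `4⟪m - xᵢ, v⟫`, which is `2√3` times twice the
signed area of `x` for every `i`; summing gives `6√3` times it. -/

theorem norm_outer_apex_sub_sq_sub_norm_inner_apex_sub_sq (a b c : ℂ) :
    ‖(b + c) / 2 + (Real.sqrt 3 / 2 : ℝ) * (-I) * (c - b) - a‖ ^ 2 -
        ‖(b + c) / 2 + (Real.sqrt 3 / 2 : ℝ) * I * (c - b) - a‖ ^ 2 =
      2 * Real.sqrt 3 * ((starRingEnd ℂ) (b - a) * (c - a)).im := by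
  simp only [Complex.sq_norm, Complex.normSq_apply, Complex.add_re, Complex.add_im,
    Complex.sub_re, Complex.sub_im, Complex.mul_re, Complex.mul_im, Complex.neg_re,
    Complex.neg_im, Complex.I_re, Complex.I_im, Complex.ofReal_re, Complex.ofReal_im,
    Complex.conj_re, Complex.conj_im, Complex.div_ofNat_re, Complex.div_ofNat_im]
  ring

theorem im_conj_sub_mul_sub_rotate (a b c : ℂ) :
    ((starRingEnd ℂ) (c - b) * (a - b)).im = ((starRingEnd ℂ) (b - a) * (c - a)).im := by
  simp only [Complex.mul_im, Complex.sub_re, Complex.sub_im, Complex.conj_re, Complex.conj_im]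
  ring

theorem torricelli_sum_sq_sub (x : ℂ × ℂ × ℂ) :
    ‖(Tminus x).1 - x.1‖ ^ 2 + ‖(Tminus x).2.1 - x.2.1‖ ^ 2 + ‖(Tminus x).2.2 - x.2.2‖ ^ 2 -
        (‖(Tplus x).1 - x.1‖ ^ 2 + ‖(Tplus x).2.1 - x.2.1‖ ^ 2 +
          ‖(Tplus x).2.2 - x.2.2‖ ^ 2) =
      6 * Real.sqrt 3 * ((starRingEnd ℂ) (x.2.1 - x.1) * (x.2.2 - x.1)).im := by
  obtain ⟨a, b, c⟩ := x
  simp only [Tplus, Tminus]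
  linear_combination norm_outer_apex_sub_sq_sub_norm_inner_apex_sub_sq a b c +
    norm_outer_apex_sub_sq_sub_norm_inner_apex_sub_sq b c a +
    norm_outer_apex_sub_sq_sub_norm_inner_apex_sub_sq c a b +
    2 * Real.sqrt 3 * (2 * im_conj_sub_mul_sub_rotate a b c + im_conj_sub_mul_sub_rotate b c a)

theorem inner_torricelli_closer_than_outer (x : ℂ × ℂ × ℂ)
    (hpos : 0 ≤ ((starRingEnd ℂ) (x.2.1 - x.1) * (x.2.2 - x.1)).im) :
    (‖(Tplus x).1 - x.1‖ ^ 2 + ‖(Tplus x).2.1 - x.2.1‖ ^ 2 +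
        ‖(Tplus x).2.2 - x.2.2‖ ^ 2 ≤
      ‖(Tminus x).1 - x.1‖ ^ 2 + ‖(Tminus x).2.1 - x.2.1‖ ^ 2 +
        ‖(Tminus x).2.2 - x.2.2‖ ^ 2) ∧
    (‖(Tplus x).1 - x.1‖ ^ 2 + ‖(Tplus x).2.1 - x.2.1‖ ^ 2 +
        ‖(Tplus x).2.2 - x.2.2‖ ^ 2 =
      ‖(Tminus x).1 - x.1‖ ^ 2 + ‖(Tminus x).2.1 - x.2.1‖ ^ 2 +
        ‖(Tminus x).2.2 - x.2.2‖ ^ 2 ↔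
      ((starRingEnd ℂ) (x.2.1 - x.1) * (x.2.2 - x.1)).im = 0) := by
  have hsum := torricelli_sum_sq_sub x
  have hscale : 0 < 6 * Real.sqrt 3 := by positivity
  constructor
  · rw [← sub_nonneg, hsum]
    exact mul_nonneg hscale.le hpos
  · rw [eq_comm, ← sub_eq_zero, hsum, mul_eq_zero, or_iff_right hscale.ne']
end

section
/- Uniqueness of the optimally aligned equilateral triangle: let x = (x₁, x₂, x₃) ∈ ℂ³ be strictly positively oriented, i.e., Im((conj(x₂ − x₁))·(x₃ − x₁)) > 0, and write z = N⁻(N⁻(x)). If a triple y = (y₁, y₂, y₃) ∈ ℂ³ satisfies |y₁ − y₂| = |y₁ − y₃| = |y₂ − y₃| and Σᵢ |xᵢ − yᵢ|² = Σᵢ |xᵢ − zᵢ|², i.e., it attains the minimum of the sum of squared distances to x among all equilateral triples, then y = z. -/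
open Complex

/-! Write ω = e^{2πi/3} and expand a triple in the discrete Fourier basis,
x = (a + b + c, a + ωb + ω²c, a + ω²b + ωc), with a the centroid. In these coordinates
everything becomes diagonal: the sum of squared distances is 3 times the squared distance of
the coefficients (Parseval), N⁻ maps (a, b, c) to (a, -b, 0), so N⁻ ∘ N⁻ maps it to (a, b, 0),
a triple is equilateral iff b = 0 or c = 0 (since 9 b c̄ is a combination of the squared side
lengths with coefficients 1, ω, ω²), and Im(conj(x₂ - x₁)(x₃ - x₁)) = (3√3/2)(|b|² - |c|²).
So for positively oriented x we have |c| < |b|, and among the equilateral triples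
(a', b', 0) and (a', 0, c') the cost 3(|a - a'|² + |b - b'|² + |c - c'|²) is minimal
exactly at (a, b, 0). -/

open ComplexConjugate

noncomputable section

namespace Napoleon

def ω : ℂ := (-1 + Real.sqrt 3 * I) / 2

theorem ofReal_sqrt_three_mul_I : (Real.sqrt 3 : ℂ) * I = 2 * ω + 1 := by
  rw [ω]; ring

theorem ω_sq_add_ω_add_one : ω ^ 2 + ω + 1 = 0 := by
  have h : (Real.sqrt 3 : ℂ) ^ 2 = 3 := by norm_cast; simp
  rw [ω]; linear_combination (I ^ 2 / 4) * h + (3 / 4 : ℂ) * I_sq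

theorem conj_ω : conj ω = ω ^ 2 := by
  have h : conj ω = -1 - ω := by
    simp only [ω, map_div₀, map_add, map_neg, map_one, map_mul, conj_ofReal, conj_I, map_ofNat]
    ring
  linear_combination h - ω_sq_add_ω_add_one

def ofFourier (a b c : ℂ) : ℂ × ℂ × ℂ :=
  (a + b + c, a + ω * b + ω ^ 2 * c, a + ω ^ 2 * b + ω * c)

def fourier₁ (x : ℂ × ℂ × ℂ) : ℂ := (x.1 + ω ^ 2 * x.2.1 + ω * x.2.2) / 3

def fourier₂ (x : ℂ × ℂ × ℂ) : ℂ := (x.1 + ω * x.2.1 + ω ^ 2 * x.2.2) / 3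

theorem ofFourier_fourier (x : ℂ × ℂ × ℂ) :
    ofFourier (centroid3 x) (fourier₁ x) (fourier₂ x) = x := by
  have := ω_sq_add_ω_add_one
  simp only [ofFourier, centroid3, fourier₁, fourier₂, Prod.ext_iff]
  refine ⟨?_, ?_, ?_⟩ <;> grind

theorem centroid3_ofFourier (a b c : ℂ) : centroid3 (ofFourier a b c) = a := by
  have := ω_sq_add_ω_add_one
  simp only [ofFourier, centroid3]
  grind

theorem fourier₁_ofFourier (a b c : ℂ) : fourier₁ (ofFourier a b c) = b := by
  have := ω_sq_add_ω_add_one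
  simp only [ofFourier, fourier₁]
  grind

theorem Nminus_eq_ofFourier (x : ℂ × ℂ × ℂ) :
    Nminus x = ofFourier (centroid3 x) (-fourier₁ x) 0 := by
  have := ω_sq_add_ω_add_one
  have hs : ((Real.sqrt 3 / 2 : ℝ) : ℂ) * -I = -ω - 1 / 2 := by
    push_cast
    linear_combination -ofReal_sqrt_three_mul_I / 2
  simp only [Nminus, Tminus, ofFourier, centroid3, fourier₁, Prod.ext_iff, hs]
  refine ⟨?_, ?_, ?_⟩ <;> grind

theorem Nminus_Nminus_eq_ofFourier (x : ℂ × ℂ × ℂ) :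
    Nminus (Nminus x) = ofFourier (centroid3 x) (fourier₁ x) 0 := by
  rw [Nminus_eq_ofFourier, Nminus_eq_ofFourier, centroid3_ofFourier, fourier₁_ofFourier, neg_neg]

def sqDist (x y : ℂ × ℂ × ℂ) : ℝ :=
  ‖x.1 - y.1‖ ^ 2 + ‖x.2.1 - y.2.1‖ ^ 2 + ‖x.2.2 - y.2.2‖ ^ 2

theorem sqDist_ofFourier (a b c a' b' c' : ℂ) :
    sqDist (ofFourier a b c) (ofFourier a' b' c') =
      3 * (‖a - a'‖ ^ 2 + ‖b - b'‖ ^ 2 + ‖c - c'‖ ^ 2) := by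
  have := ω_sq_add_ω_add_one
  apply ofReal_injective
  simp only [sqDist, ofFourier, ← normSq_eq_norm_sq, ofReal_add, ofReal_mul, ← mul_conj,
    map_add, map_sub, map_mul, map_pow, conj_ω, ofReal_ofNat]
  grind

theorem fourier₁_mul_conj_fourier₂ (y : ℂ × ℂ × ℂ) :
    9 * (fourier₁ y * conj (fourier₂ y)) =
      -(normSq (y.2.1 - y.2.2) + ω * normSq (y.1 - y.2.2) + ω ^ 2 * normSq (y.1 - y.2.1)) := by
  have := ω_sq_add_ω_add_one
  simp only [fourier₁, fourier₂, ← mul_conj, map_add, map_sub, map_mul, map_pow, map_div₀, conj_ω,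
    map_ofNat]
  grind

theorem fourier₁_eq_zero_or_fourier₂_eq_zero {y : ℂ × ℂ × ℂ}
    (h₁ : ‖y.1 - y.2.1‖ = ‖y.1 - y.2.2‖) (h₂ : ‖y.1 - y.2.2‖ = ‖y.2.1 - y.2.2‖) :
    fourier₁ y = 0 ∨ fourier₂ y = 0 := by
  have h := fourier₁_mul_conj_fourier₂ y
  rw [normSq_eq_norm_sq, normSq_eq_norm_sq, normSq_eq_norm_sq, ← h₂, ← h₁] at h
  have : fourier₁ y * conj (fourier₂ y) = 0 := by
    linear_combination h / 9 - ((‖y.1 - y.2.1‖ ^ 2 : ℝ) / 9 : ℂ) * ω_sq_add_ω_add_one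
  simpa using this

theorem im_conj_sub_mul_sub (x : ℂ × ℂ × ℂ) :
    (conj (x.2.1 - x.1) * (x.2.2 - x.1)).im =
      3 * Real.sqrt 3 / 2 * (normSq (fourier₁ x) - normSq (fourier₂ x)) := by
  have key : conj (x.2.1 - x.1) * (x.2.2 - x.1) - conj (conj (x.2.1 - x.1) * (x.2.2 - x.1)) =
      3 * (2 * ω + 1) * (fourier₁ x * conj (fourier₁ x) - fourier₂ x * conj (fourier₂ x)) := by
    have := ω_sq_add_ω_add_one
    simp only [fourier₁, fourier₂, map_add, map_sub, map_mul, map_pow, map_div₀, conj_conj,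
      conj_ω, map_ofNat]
    grind
  rw [sub_conj, mul_conj, mul_conj, ← ofReal_sqrt_three_mul_I] at key
  apply ofReal_injective
  apply mul_right_cancel₀ I_ne_zero
  push_cast at key ⊢
  linear_combination key / 2

theorem norm_fourier₂_lt_norm_fourier₁ {x : ℂ × ℂ × ℂ}
    (h : 0 < (conj (x.2.1 - x.1) * (x.2.2 - x.1)).im) :
    ‖fourier₂ x‖ < ‖fourier₁ x‖ := by
  rw [im_conj_sub_mul_sub, normSq_eq_norm_sq, normSq_eq_norm_sq] at h
  have hsq : ‖fourier₂ x‖ ^ 2 < ‖fourier₁ x‖ ^ 2 :=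
    sub_pos.mp (pos_of_mul_pos_right h (by positivity))
  exact lt_of_pow_lt_pow_left₀ 2 (norm_nonneg _) hsq

theorem ofFourier_eq_of_sqDist_le {a b c d e f : ℂ} (hcb : ‖c‖ < ‖b‖) (hef : e = 0 ∨ f = 0)
    (h : sqDist (ofFourier a b c) (ofFourier d e f) ≤
      sqDist (ofFourier a b c) (ofFourier a b 0)) :
    ofFourier d e f = ofFourier a b 0 := by
  rw [sqDist_ofFourier, sqDist_ofFourier] at h
  rcases hef with rfl | rfl <;> simp only [sub_self, sub_zero, norm_zero] at h
  · nlinarith [norm_nonneg (a - d), norm_nonneg (c - f), norm_nonneg c]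
  · have had : ‖a - d‖ = 0 := by nlinarith [norm_nonneg (a - d), norm_nonneg (b - e)]
    have hbe : ‖b - e‖ = 0 := by nlinarith [norm_nonneg (a - d), norm_nonneg (b - e)]
    rw [norm_eq_zero, sub_eq_zero] at had hbe
    rw [had, hbe]

end Napoleon

end

open Napoleon

theorem double_outer_napoleon_unique_optimum (x : ℂ × ℂ × ℂ)
    (hpos : 0 < ((starRingEnd ℂ) (x.2.1 - x.1) * (x.2.2 - x.1)).im)
    (y : ℂ × ℂ × ℂ)
    (hy1 : ‖y.1 - y.2.1‖ = ‖y.1 - y.2.2‖)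
    (hy2 : ‖y.1 - y.2.2‖ = ‖y.2.1 - y.2.2‖)
    (hopt : ‖x.1 - y.1‖ ^ 2 + ‖x.2.1 - y.2.1‖ ^ 2 +
        ‖x.2.2 - y.2.2‖ ^ 2 =
      ‖x.1 - (Nminus (Nminus x)).1‖ ^ 2 +
        ‖x.2.1 - (Nminus (Nminus x)).2.1‖ ^ 2 +
        ‖x.2.2 - (Nminus (Nminus x)).2.2‖ ^ 2) :
    y = Nminus (Nminus x) := by
  have hz := Nminus_Nminus_eq_ofFourier x
  rw [hz, ← ofFourier_fourier y]
  refine ofFourier_eq_of_sqDist_le (norm_fourier₂_lt_norm_fourier₁ hpos)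
    (fourier₁_eq_zero_or_fourier₂_eq_zero hy1 hy2) ?_
  rw [ofFourier_fourier, ofFourier_fourier, ← hz]
  exact hopt.le
end

section
/- Planarity of optimally aligned equilateral triangles: let d ≥ 2 and let x₁, x₂, x₃ ∈ EuclideanSpace ℝ d be affinely independent points. Suppose (y₁, y₂, y₃) is a global minimizer of the sum of squared distances to x subject to the equilateral constraint; that is, ‖y₁ − y₂‖ = ‖y₁ − y₃‖ = ‖y₂ − y₃‖ and for every triple (z₁, z₂, z₃) with ‖z₁ − z₂‖ = ‖z₁ − z₃‖ = ‖z₂ − z₃‖ one has Σᵢ ‖xᵢ − yᵢ‖² ≤ Σᵢ ‖xᵢ − zᵢ‖². Then each yᵢ lies in the affine span of {x₁, x₂, x₃}. -/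
/-!
Rotating a triple about a vertex `x j` keeps it equilateral. Take a unit normal `e` to the plane
of the `x`'s and a unit `f ⊥ e`; since `e ⊥ x k - x j`, rotating the `y`'s by the angle `θ` in the
plane of `e, f` changes the cost by `-2 (sin θ * Q + (cos θ - 1) * P)` for some `P`, where
`Q = ∑ ⟪e, y k - x j⟫ ⟪f, x k - x j⟫`, so optimality over all angles forces `Q = 0`. Choosing `f`
along `∑ ⟪e, y k - x j⟫ • (x k - x j)` shows that this vector vanishes, and affine independence
then gives `⟪e, y i - x j⟫ = 0` for all `i ≠ j`.
-/

open Set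
open scoped RealInnerProductSpace

lemma eq_zero_of_forall_sq_add_sq_eq_one {P Q : ℝ}
    (h : ∀ c s : ℝ, c ^ 2 + s ^ 2 = 1 → s * Q + (c - 1) * P ≤ 0) : Q = 0 := by
  by_contra hQ
  set ρ := √(P ^ 2 + Q ^ 2)
  have hρ : 0 < ρ := Real.sqrt_pos.2 (by positivity)
  have hρ2 : ρ ^ 2 = P ^ 2 + Q ^ 2 := Real.sq_sqrt (by positivity)
  -- the optimal angle
  have hopt := h (P / ρ) (Q / ρ) (by field_simp; linarith)
  have hPρ : ρ ≤ P := by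
    have : Q / ρ * Q + (P / ρ - 1) * P = ρ - P := by field_simp; linarith
    linarith
  nlinarith [sq_pos_of_ne_zero hQ]

section InnerProductSpace

variable {E : Type*} [NormedAddCommGroup E] [InnerProductSpace ℝ E]

/-- For orthonormal `e, f` and `c = cos θ`, `s = sin θ`: the rotation by `θ` in the plane of
`e, f`, fixing its orthogonal complement. -/
noncomputable def planeRotation (e f : E) (c s : ℝ) : E →ₗ[ℝ] E :=
  LinearMap.id + ((c - 1) • innerₛₗ ℝ e - s • innerₛₗ ℝ f).smulRight e +
    (s • innerₛₗ ℝ e + (c - 1) • innerₛₗ ℝ f).smulRight f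

theorem planeRotation_apply (e f : E) (c s : ℝ) (v : E) :
    planeRotation e f c s v =
      v + ((c - 1) * ⟪e, v⟫ - s * ⟪f, v⟫) • e + (s * ⟪e, v⟫ + (c - 1) * ⟪f, v⟫) • f := by
  simp [planeRotation]

theorem norm_planeRotation {e f : E} (he : ‖e‖ = 1) (hf : ‖f‖ = 1) (hef : ⟪e, f⟫ = 0)
    {c s : ℝ} (hcs : c ^ 2 + s ^ 2 = 1) (v : E) :
    ‖planeRotation e f c s v‖ = ‖v‖ := by
  have hee : ⟪e, e⟫ = 1 := by rw [real_inner_self_eq_norm_sq, he]; norm_num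
  have hff : ⟪f, f⟫ = 1 := by rw [real_inner_self_eq_norm_sq, hf]; norm_num
  have hfe : ⟪f, e⟫ = 0 := by rw [real_inner_comm, hef]
  rw [← sq_eq_sq₀ (norm_nonneg _) (norm_nonneg _), ← real_inner_self_eq_norm_sq,
    ← real_inner_self_eq_norm_sq, planeRotation_apply]
  simp only [inner_add_left, inner_add_right, real_inner_smul_left, real_inner_smul_right,
    hee, hff, hef, hfe, real_inner_comm _ v]
  linear_combination (⟪e, v⟫ ^ 2 + ⟪f, v⟫ ^ 2) * hcs

noncomputable def planeRotationₗᵢ {e f : E} (he : ‖e‖ = 1) (hf : ‖f‖ = 1) (hef : ⟪e, f⟫ = 0)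
    {c s : ℝ} (hcs : c ^ 2 + s ^ 2 = 1) : E →ₗᵢ[ℝ] E :=
  ⟨planeRotation e f c s, norm_planeRotation he hf hef hcs⟩

theorem norm_sub_planeRotation_sq {e f x : E} (he : ‖e‖ = 1) (hf : ‖f‖ = 1)
    (hef : ⟪e, f⟫ = 0) (hex : ⟪e, x⟫ = 0) {c s : ℝ} (hcs : c ^ 2 + s ^ 2 = 1) (y : E) :
    ‖x - planeRotation e f c s y‖ ^ 2 =
      ‖x - y‖ ^ 2 - 2 * (s * ⟪e, y⟫ + (c - 1) * ⟪f, y⟫) * ⟪f, x⟫ := by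
  rw [norm_sub_sq_real, norm_sub_sq_real, norm_planeRotation he hf hef hcs, planeRotation_apply]
  simp only [inner_add_right, real_inner_smul_right, real_inner_comm e x, real_inner_comm f x, hex]
  ring

theorem sum_inner_mul_inner_eq_zero_of_orthonormal {ι : Type*} [Fintype ι] {x y : ι → E}
    {e f : E} (he : ‖e‖ = 1) (hf : ‖f‖ = 1) (hef : ⟪e, f⟫ = 0) (hex : ∀ k, ⟪e, x k⟫ = 0)
    (hmin : ∀ R : E →ₗᵢ[ℝ] E, ∑ k, ‖x k - y k‖ ^ 2 ≤ ∑ k, ‖x k - R (y k)‖ ^ 2) :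
    ∑ k, ⟪e, y k⟫ * ⟪f, x k⟫ = 0 := by
  refine eq_zero_of_forall_sq_add_sq_eq_one (P := ∑ k, ⟪f, y k⟫ * ⟪f, x k⟫) fun c s hcs ↦ ?_
  have h := hmin (planeRotationₗᵢ he hf hef hcs)
  simp only [planeRotationₗᵢ, LinearIsometry.coe_mk,
    norm_sub_planeRotation_sq he hf hef (hex _) hcs, Finset.sum_sub_distrib] at h
  have hsum : ∑ k, 2 * (s * ⟪e, y k⟫ + (c - 1) * ⟪f, y k⟫) * ⟪f, x k⟫ =
      2 * (s * ∑ k, ⟪e, y k⟫ * ⟪f, x k⟫ + (c - 1) * ∑ k, ⟪f, y k⟫ * ⟪f, x k⟫) := by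
    simp only [Finset.mul_sum, ← Finset.sum_add_distrib]
    exact Finset.sum_congr rfl fun _ _ ↦ by ring
  linarith

theorem sum_inner_smul_eq_zero_of_forall_linearIsometry {ι : Type*} [Fintype ι] {x y : ι → E}
    {e : E} (hex : ∀ k, ⟪e, x k⟫ = 0)
    (hmin : ∀ R : E →ₗᵢ[ℝ] E, ∑ k, ‖x k - y k‖ ^ 2 ≤ ∑ k, ‖x k - R (y k)‖ ^ 2) :
    ∑ k, ⟪e, y k⟫ • x k = 0 := by
  set v := ∑ k, ⟪e, y k⟫ • x k with hv_def
  by_contra hv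
  obtain rfl | he := eq_or_ne e 0
  · simp [hv_def] at hv
  have hev : ⟪e, v⟫ = 0 := by simp [hv_def, inner_sum, real_inner_smul_right, hex]
  have he1 : ‖‖e‖⁻¹ • e‖ = 1 := norm_smul_inv_norm (𝕜 := ℝ) he
  have hv1 : ‖‖v‖⁻¹ • v‖ = 1 := norm_smul_inv_norm (𝕜 := ℝ) hv
  have hQ := sum_inner_mul_inner_eq_zero_of_orthonormal he1 hv1
    (by simp [real_inner_smul_left, real_inner_smul_right, hev])
    (by simp [real_inner_smul_left, hex]) hmin
  have hQv : ∑ k, ⟪‖e‖⁻¹ • e, y k⟫ * ⟪‖v‖⁻¹ • v, x k⟫ = ‖e‖⁻¹ * ‖v‖⁻¹ * ⟪v, v⟫ := by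
    have hvv : ⟪v, v⟫ = ∑ k, ⟪e, y k⟫ * ⟪v, x k⟫ := by
      nth_rw 2 [hv_def]
      simp only [inner_sum, real_inner_smul_right]
    simp only [real_inner_smul_left, hvv, Finset.mul_sum]
    exact Finset.sum_congr rfl fun _ _ ↦ by ring
  rw [hQv, real_inner_self_eq_norm_sq] at hQ
  simp [he, hv] at hQ

theorem AffineIndependent.mem_affineSpan_of_forall_affineIsometry {ι : Type*} [Fintype ι]
    {x y : ι → E} (hx : AffineIndependent ℝ x)
    (hmin : ∀ R : E →ᵃⁱ[ℝ] E, ∑ k, ‖x k - y k‖ ^ 2 ≤ ∑ k, ‖x k - R (y k)‖ ^ 2) {i j : ι}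
    (hij : i ≠ j) : y i ∈ affineSpan ℝ (range x) := by
  classical
  have hrot : ∀ L : E →ₗᵢ[ℝ] E,
      ∑ k, ‖(x k - x j) - (y k - x j)‖ ^ 2 ≤ ∑ k, ‖(x k - x j) - L (y k - x j)‖ ^ 2 := by
    intro L
    have h := hmin ((AffineIsometryEquiv.vaddConst ℝ (x j)).toAffineIsometry.comp
      (L.toAffineIsometry.comp (AffineIsometryEquiv.vaddConst ℝ (x j)).symm.toAffineIsometry))
    convert h using 4 with k
    · rw [sub_sub_sub_cancel_right]
    · simp only [AffineIsometry.coe_comp, Function.comp_apply, AffineIsometryEquiv.coe_vaddConst,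
        AffineIsometryEquiv.coe_toAffineIsometry, AffineIsometryEquiv.coe_vaddConst_symm,
        LinearIsometry.coe_toAffineIsometry, vsub_eq_sub, vadd_eq_add, map_sub]
      abel
  have horth : ∀ e ∈ (vectorSpan ℝ (range x))ᗮ, ⟪e, y i - x j⟫ = 0 := by
    intro e he
    have hex : ∀ k, ⟪e, x k - x j⟫ = 0 := fun k ↦ Submodule.inner_left_of_mem_orthogonal
      (vsub_mem_vectorSpan ℝ (mem_range_self k) (mem_range_self j)) he
    have hsum := sum_inner_smul_eq_zero_of_forall_linearIsometry hex hrot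
    rw [Fintype.sum_eq_add_sum_subtype_ne _ j, sub_self, smul_zero, zero_add] at hsum
    exact Fintype.linearIndependent_iff.1
      ((affineIndependent_iff_linearIndependent_vsub ℝ x j).1 hx) _ hsum ⟨i, hij⟩
  rw [← AffineSubspace.vsub_right_mem_direction_iff_mem
    (subset_affineSpan ℝ _ (mem_range_self j)), direction_affineSpan,
    ← Submodule.orthogonal_orthogonal (vectorSpan ℝ (range x))]
  exact horth

end InnerProductSpace

theorem optimal_equilateral_in_affine_span_general (d : ℕ)
    (x₁ x₂ x₃ : EuclideanSpace ℝ (Fin d)) (hx : AffineIndependent ℝ ![x₁, x₂, x₃])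
    (y₁ y₂ y₃ : EuclideanSpace ℝ (Fin d))
    (hy1 : ‖y₁ - y₂‖ = ‖y₁ - y₃‖) (hy2 : ‖y₁ - y₃‖ = ‖y₂ - y₃‖)
    (hopt : ∀ z₁ z₂ z₃ : EuclideanSpace ℝ (Fin d),
      ‖z₁ - z₂‖ = ‖z₁ - z₃‖ → ‖z₁ - z₃‖ = ‖z₂ - z₃‖ →
      ‖x₁ - y₁‖ ^ 2 + ‖x₂ - y₂‖ ^ 2 + ‖x₃ - y₃‖ ^ 2 ≤
        ‖x₁ - z₁‖ ^ 2 + ‖x₂ - z₂‖ ^ 2 + ‖x₃ - z₃‖ ^ 2) :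
    y₁ ∈ affineSpan ℝ {x₁, x₂, x₃} ∧ y₂ ∈ affineSpan ℝ {x₁, x₂, x₃} ∧
      y₃ ∈ affineSpan ℝ {x₁, x₂, x₃} := by
  have hmin : ∀ R : EuclideanSpace ℝ (Fin d) →ᵃⁱ[ℝ] EuclideanSpace ℝ (Fin d),
      ∑ k, ‖![x₁, x₂, x₃] k - ![y₁, y₂, y₃] k‖ ^ 2 ≤
        ∑ k, ‖![x₁, x₂, x₃] k - R (![y₁, y₂, y₃] k)‖ ^ 2 := by
    intro R
    have hR : ∀ a b, ‖R a - R b‖ = ‖a - b‖ := by simpa only [dist_eq_norm] using R.dist_map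
    simpa [Fin.sum_univ_three] using hopt (R y₁) (R y₂) (R y₃) (by rw [hR, hR, hy1])
      (by rw [hR, hR, hy2])
  have hrange : range ![x₁, x₂, x₃] = {x₁, x₂, x₃} := by
    rw [Matrix.range_cons, Matrix.range_cons_cons_empty, Set.singleton_union]
  rw [← hrange]
  exact ⟨hx.mem_affineSpan_of_forall_affineIsometry hmin (i := 0) (j := 1) (by decide),
    hx.mem_affineSpan_of_forall_affineIsometry hmin (i := 1) (j := 0) (by decide),
    hx.mem_affineSpan_of_forall_affineIsometry hmin (i := 2) (j := 0) (by decide)⟩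

theorem optimal_equilateral_in_affine_span (d : ℕ) (hd : 2 ≤ d)
    (x₁ x₂ x₃ : EuclideanSpace ℝ (Fin d)) (hx : AffineIndependent ℝ ![x₁, x₂, x₃])
    (y₁ y₂ y₃ : EuclideanSpace ℝ (Fin d))
    (hy1 : ‖y₁ - y₂‖ = ‖y₁ - y₃‖) (hy2 : ‖y₁ - y₃‖ = ‖y₂ - y₃‖)
    (hopt : ∀ z₁ z₂ z₃ : EuclideanSpace ℝ (Fin d),
      ‖z₁ - z₂‖ = ‖z₁ - z₃‖ → ‖z₁ - z₃‖ = ‖z₂ - z₃‖ →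
      ‖x₁ - y₁‖ ^ 2 + ‖x₂ - y₂‖ ^ 2 + ‖x₃ - y₃‖ ^ 2 ≤
        ‖x₁ - z₁‖ ^ 2 + ‖x₂ - z₂‖ ^ 2 + ‖x₃ - z₃‖ ^ 2) :
    y₁ ∈ affineSpan ℝ {x₁, x₂, x₃} ∧ y₂ ∈ affineSpan ℝ {x₁, x₂, x₃} ∧
      y₃ ∈ affineSpan ℝ {x₁, x₂, x₃} :=
  optimal_equilateral_in_affine_span_general d x₁ x₂ x₃ hx y₁ y₂ y₃ hy1 hy2 hopt
end
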